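/- Let α > 0 and let Φ : (0,α] → ℝ be continuous with ∫₀^α |Φ(ζ)|/ζ³ dζ < ∞. Let G be the kernel associated with α and Φ. Then G extends continuously to θ = 0 with limit lim_{θ → 0} G(θ) = (α/√π) · exp(−α²/4) · ∫₀^α Φ(ζ)/ζ³ dζ. -/

import Mathlib

open MeasureTheory Set Filter Topology


lemma sqrt_le_exp {t : ℝ} (ht : 0 ≤ t) : Real.sqrt t ≤ Real.exp t := by
  rcases le_or_gt t 1 with h | h
  · exact le_trans (Real.sqrt_le_one.2 h) (Real.one_le_exp ht)
  · have h1 : Real.sqrt t ≤ t := by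
      nlinarith [Real.sq_sqrt ht, Real.sqrt_nonneg t]
    linarith [Real.add_one_le_exp t]

lemma sqrt_exp_bound {x c : ℝ} (hx : 0 < x) (hc : 0 < c) :
    (1 / Real.sqrt x) * Real.exp (-(c / x)) ≤ 1 / Real.sqrt c := by
  set t := c / x with ht
  have htpos : 0 < t := div_pos hc hx
  have hxe : x = c / t := by rw [ht, div_div_eq_mul_div, mul_div_cancel_left₀ x hc.ne']
  have hsx : Real.sqrt x = Real.sqrt c / Real.sqrt t := by
    rw [hxe, Real.sqrt_div hc.le]
  have h1 : (1 : ℝ) / Real.sqrt x = Real.sqrt t / Real.sqrt c := by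
    rw [hsx]; rw [one_div_div]
  rw [h1]
  have hst : Real.sqrt t * Real.exp (-t) ≤ 1 := by
    rw [Real.exp_neg, mul_inv_le_iff₀ (Real.exp_pos t)]
    simpa using sqrt_le_exp htpos.le
  have hcpos : 0 < Real.sqrt c := Real.sqrt_pos.2 hc
  calc Real.sqrt t / Real.sqrt c * Real.exp (-t)
      = (Real.sqrt t * Real.exp (-t)) / Real.sqrt c := by ring
    _ ≤ 1 / Real.sqrt c := by gcongr

/-- Bound on the integrand. -/
lemma integrand_bound (α : ℝ) (hα : 0 < α) (Φ : ℝ → ℝ) {θ ζ : ℝ}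
    (hθ : |θ| ≤ 1/2) (hζ : 0 < ζ) (hx : α ^ 2 * θ ^ 2 < ζ ^ 2) :
    |(1 / Real.sqrt (ζ ^ 2 - α ^ 2 * θ ^ 2)) *
        Real.exp (-(α ^ 2 * ζ ^ 2 * (1 - θ) ^ 2) / (4 * (ζ ^ 2 - α ^ 2 * θ ^ 2))) *
        (Φ ζ / ζ ^ 2)| ≤ (4 / α) * (|Φ ζ| / ζ ^ 3) := by
  set x := ζ ^ 2 - α ^ 2 * θ ^ 2 with hxdef
  clear_value x
  have hxpos : 0 < x := by rw [hxdef]; linarith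
  have hsx : 0 < Real.sqrt x := Real.sqrt_pos.2 hxpos
  have key : (1 / Real.sqrt x) *
      Real.exp (-(α ^ 2 * ζ ^ 2 * (1 - θ) ^ 2) / (4 * x)) ≤ 4 / (α * ζ) := by
    have hc' : (0:ℝ) < α ^ 2 * ζ ^ 2 / 16 := by positivity
    have hmono : Real.exp (-(α ^ 2 * ζ ^ 2 * (1 - θ) ^ 2) / (4 * x)) ≤
        Real.exp (-(α ^ 2 * ζ ^ 2 / 16 / x)) := by
      apply Real.exp_le_exp.2
      rw [neg_div, neg_le_neg_iff,
        show α ^ 2 * ζ ^ 2 * (1 - θ) ^ 2 / (4 * x) = (α ^ 2 * ζ ^ 2 * (1 - θ) ^ 2 / 4) / x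
          from by ring]
      have h1 : (1:ℝ)/4 ≤ (1 - θ) ^ 2 := by
        cases' abs_le.1 hθ with h2 h3; nlinarith
      apply (div_le_div_iff_of_pos_right hxpos).2
      nlinarith [sq_nonneg (α * ζ)]
    have := sqrt_exp_bound hxpos hc'
    have hsc : Real.sqrt (α ^ 2 * ζ ^ 2 / 16) = α * ζ / 4 := by
      rw [show α ^ 2 * ζ ^ 2 / 16 = (α * ζ / 4) ^ 2 by ring]
      exact Real.sqrt_sq (by positivity)
    calc (1 / Real.sqrt x) * Real.exp (-(α ^ 2 * ζ ^ 2 * (1 - θ) ^ 2) / (4 * x))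
        ≤ (1 / Real.sqrt x) * Real.exp (-(α ^ 2 * ζ ^ 2 / 16 / x)) := by
          apply mul_le_mul_of_nonneg_left hmono (by positivity)
      _ ≤ 1 / Real.sqrt (α ^ 2 * ζ ^ 2 / 16) := this
      _ = 4 / (α * ζ) := by rw [hsc, one_div_div]
  have hnn : 0 ≤ (1 / Real.sqrt x) *
      Real.exp (-(α ^ 2 * ζ ^ 2 * (1 - θ) ^ 2) / (4 * x)) := by positivity
  rw [abs_mul, abs_of_nonneg hnn, abs_div, abs_of_nonneg (by positivity : (0:ℝ) ≤ ζ ^ 2)]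
  calc (1 / Real.sqrt x) * Real.exp (-(α ^ 2 * ζ ^ 2 * (1 - θ) ^ 2) / (4 * x)) *
        (|Φ ζ| / ζ ^ 2)
      ≤ (4 / (α * ζ)) * (|Φ ζ| / ζ ^ 2) := by
        apply mul_le_mul_of_nonneg_right key (by positivity)
    _ = (4 / α) * (|Φ ζ| / ζ ^ 3) := by
        rw [div_mul_div_comm, div_mul_div_comm]
        rw [show α * ζ * ζ ^ 2 = α * ζ ^ 3 from by ring]

/-- The kernel G associated with α and Φ:
G(θ) = (α/√π) ∫_{α|θ|}^{α} (ζ² - α²θ²)^{-1/2}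
         exp(-α²ζ²(1-θ)²/(4(ζ² - α²θ²))) Φ(ζ)/ζ² dζ. -/
noncomputable def kernelG (α : ℝ) (Φ : ℝ → ℝ) (θ : ℝ) : ℝ :=
  (α / Real.sqrt Real.pi) *
    ∫ ζ in (α * |θ|)..α,
      (1 / Real.sqrt (ζ ^ 2 - α ^ 2 * θ ^ 2)) *
        Real.exp (-(α ^ 2 * ζ ^ 2 * (1 - θ) ^ 2) / (4 * (ζ ^ 2 - α ^ 2 * θ ^ 2))) *
        (Φ ζ / ζ ^ 2)


/-- If ∫₀^α |Φ(ζ)|/ζ³ dζ < ∞, then G extends continuously to θ = 0,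
with limit (α/√π) e^{-α²/4} ∫₀^α Φ(ζ)/ζ³ dζ. -/
theorem kernelG_limit_at_zero
    (α : ℝ) (hα : 0 < α) (Φ : ℝ → ℝ) (hΦ : ContinuousOn Φ (Ioc 0 α))
    (hint : IntegrableOn (fun ζ => |Φ ζ| / ζ ^ 3) (Ioc 0 α) volume) :
    Tendsto (kernelG α Φ) (nhdsWithin 0 {(0:ℝ)}ᶜ)
      (nhds ((α / Real.sqrt Real.pi) * Real.exp (-α ^ 2 / 4) *
        ∫ ζ in (0:ℝ)..α, Φ ζ / ζ ^ 3)) := by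
  set l := nhdsWithin (0:ℝ) {(0:ℝ)}ᶜ with hl
  set μ := volume.restrict (Ioc (0:ℝ) α) with hμ
  set f : ℝ → ℝ → ℝ := fun θ ζ =>
    (1 / Real.sqrt (ζ ^ 2 - α ^ 2 * θ ^ 2)) *
      Real.exp (-(α ^ 2 * ζ ^ 2 * (1 - θ) ^ 2) / (4 * (ζ ^ 2 - α ^ 2 * θ ^ 2))) *
      (Φ ζ / ζ ^ 2) with hf
  set F : ℝ → ℝ → ℝ := fun θ => (Ioc (α * |θ|) α).indicator (f θ) with hF
  set g : ℝ → ℝ := fun ζ => Real.exp (-α ^ 2 / 4) * (Φ ζ / ζ ^ 3) with hg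
  -- eventually small θ
  have hsmall : ∀ᶠ θ in l, |θ| < 1/2 ∧ θ ≠ 0 := by
    have h1 : ∀ᶠ θ in l, |θ| < 1/2 := by
      apply Filter.Eventually.filter_mono nhdsWithin_le_nhds
      have : ContinuousAt (fun θ : ℝ => |θ|) 0 := (continuous_abs).continuousAt
      have := this.preimage_mem_nhds (Iio_mem_nhds (by norm_num : |(0:ℝ)| < 1/2))
      filter_upwards [this] with θ hθ using hθ
    have h2 : ∀ᶠ θ in l, θ ≠ 0 := by
      filter_upwards [self_mem_nhdsWithin] with θ hθ using hθ
    exact h1.and h2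
  -- kernelG rewritten via indicator
  have heq : ∀ θ : ℝ, |θ| < 1/2 →
      kernelG α Φ θ = (α / Real.sqrt Real.pi) * ∫ ζ, F θ ζ ∂μ := by
    intro θ hθ
    have hle : α * |θ| ≤ α := by
      nlinarith [abs_nonneg θ]
    have hsub : Ioc (α * |θ|) α ⊆ Ioc 0 α :=
      Ioc_subset_Ioc_left (by positivity)
    rw [kernelG, intervalIntegral.integral_of_le hle]
    congr 1
    rw [hF]
    rw [integral_indicator measurableSet_Ioc, hμ, Measure.restrict_restrict measurableSet_Ioc,
      inter_eq_left.2 hsub]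
  -- continuity of f θ on the slab
  have hfc : ∀ θ : ℝ, θ ≠ 0 → ContinuousOn (f θ) (Ioc (α * |θ|) α) := by
    intro θ hθ0
    have hpos : 0 < α * |θ| := by positivity
    intro ζ hζ
    have hζ0 : 0 < ζ := lt_trans hpos hζ.1
    have hx : 0 < ζ ^ 2 - α ^ 2 * θ ^ 2 := by
      have h1 : α * |θ| < ζ := hζ.1
      nlinarith [abs_nonneg θ, sq_abs θ]
    have hc1 : ContinuousWithinAt (fun ζ : ℝ => ζ ^ 2 - α ^ 2 * θ ^ 2)
        (Ioc (α * |θ|) α) ζ := (by fun_prop : Continuous fun ζ : ℝ => ζ ^ 2 - α ^ 2 * θ ^ 2).continuousWithinAt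
    have hsqrt : ContinuousWithinAt (fun ζ : ℝ => Real.sqrt (ζ ^ 2 - α ^ 2 * θ ^ 2))
        (Ioc (α * |θ|) α) ζ := (Real.continuous_sqrt.continuousAt).comp_continuousWithinAt hc1
    have hsne : Real.sqrt (ζ ^ 2 - α ^ 2 * θ ^ 2) ≠ 0 := by
      exact ne_of_gt (Real.sqrt_pos.2 hx)
    apply ContinuousWithinAt.mul
    apply ContinuousWithinAt.mul
    · exact (continuousWithinAt_const.div hsqrt hsne)
    · apply (Real.continuous_exp.continuousAt).comp_continuousWithinAt
      apply ContinuousWithinAt.div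
      · exact (by fun_prop : Continuous fun ζ : ℝ => -(α ^ 2 * ζ ^ 2 * (1 - θ) ^ 2)).continuousWithinAt
      · exact (by fun_prop : Continuous fun ζ : ℝ => 4 * (ζ ^ 2 - α ^ 2 * θ ^ 2)).continuousWithinAt
      · positivity
    · have hsub' : Ioc (α * |θ|) α ⊆ Ioc 0 α := Ioc_subset_Ioc_left (by positivity)
      apply ContinuousWithinAt.div
      · exact (hΦ ζ (hsub' hζ)).mono hsub'
      · exact (by fun_prop : Continuous fun ζ : ℝ => ζ ^ 2).continuousWithinAt
      · positivity
  -- measurability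
  have hmeas : ∀ᶠ θ in l, AEStronglyMeasurable (F θ) μ := by
    filter_upwards [hsmall] with θ hθ
    rw [hF]
    rw [aestronglyMeasurable_indicator_iff measurableSet_Ioc]
    have hsub : Ioc (α * |θ|) α ⊆ Ioc 0 α := Ioc_subset_Ioc_left (by positivity)
    have hres : μ.restrict (Ioc (α * |θ|) α) = volume.restrict (Ioc (α * |θ|) α) := by
      rw [hμ, Measure.restrict_restrict measurableSet_Ioc, inter_eq_left.2 hsub]
    rw [hres]
    exact (hfc θ hθ.2).aestronglyMeasurable measurableSet_Ioc
  -- uniform bound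
  have hbound : ∀ᶠ θ in l, ∀ᵐ ζ ∂μ, ‖F θ ζ‖ ≤ (4 / α) * (|Φ ζ| / ζ ^ 3) := by
    filter_upwards [hsmall] with θ hθ
    rw [hμ, ae_restrict_iff' measurableSet_Ioc]
    apply Eventually.of_forall
    intro ζ hζ
    by_cases hmem : ζ ∈ Ioc (α * |θ|) α
    · rw [hF]; simp only [indicator_of_mem hmem]
      rw [Real.norm_eq_abs]
      refine integrand_bound α hα Φ hθ.1.le hζ.1 ?_
      have h2 := pow_lt_pow_left₀ hmem.1 (by positivity : (0:ℝ) ≤ α * |θ|) two_ne_zero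
      calc α ^ 2 * θ ^ 2 = (α * |θ|) ^ 2 := by rw [mul_pow, sq_abs]
        _ < ζ ^ 2 := h2
    · rw [hF]; simp only [indicator_of_notMem hmem, norm_zero]
      have : 0 < ζ := hζ.1
      positivity
  have hgint : Integrable (fun ζ => (4 / α) * (|Φ ζ| / ζ ^ 3)) μ := hint.const_mul _
  -- pointwise limit
  have hlim : ∀ᵐ ζ ∂μ, Tendsto (fun θ => F θ ζ) l (𝓝 (g ζ)) := by
    rw [hμ, ae_restrict_iff' measurableSet_Ioc]
    apply Eventually.of_forall
    intro ζ hζ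
    have hζ0 : 0 < ζ := hζ.1
    have hev : ∀ᶠ θ in l, F θ ζ = f θ ζ := by
      have h1 : ∀ᶠ θ in l, |θ| < ζ / α := by
        apply Filter.Eventually.filter_mono nhdsWithin_le_nhds
        have hca : ContinuousAt (fun θ : ℝ => |θ|) 0 := continuous_abs.continuousAt
        have hlt : |(0:ℝ)| < ζ / α := by simpa using div_pos hζ0 hα
        have := hca.preimage_mem_nhds (Iio_mem_nhds hlt)
        filter_upwards [this] with θ hθ using hθ
      filter_upwards [h1] with θ h1
      have hmem : ζ ∈ Ioc (α * |θ|) α := by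
        refine ⟨?_, hζ.2⟩
        rw [mul_comm]
        exact (lt_div_iff₀ hα).1 h1
      rw [hF]; exact indicator_of_mem hmem _
    have hcont : Tendsto (fun θ => f θ ζ) (𝓝 0) (𝓝 (f 0 ζ)) := by
      rw [hf]
      apply ContinuousAt.tendsto
      have hsne : Real.sqrt (ζ ^ 2 - α ^ 2 * (0:ℝ) ^ 2) ≠ 0 := by
        have : (0:ℝ) < ζ ^ 2 - α ^ 2 * (0:ℝ) ^ 2 := by norm_num; positivity
        exact ne_of_gt (Real.sqrt_pos.2 this)
      have hdne : 4 * (ζ ^ 2 - α ^ 2 * (0:ℝ) ^ 2) ≠ 0 := by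
        norm_num; positivity
      apply ContinuousAt.mul
      apply ContinuousAt.mul
      · exact continuousAt_const.div
          ((Real.continuous_sqrt.continuousAt).comp
            ((by fun_prop : Continuous fun θ : ℝ => ζ ^ 2 - α ^ 2 * θ ^ 2).continuousAt)) hsne
      · apply (Real.continuous_exp.continuousAt).comp
        apply ContinuousAt.div
        · exact (by fun_prop : Continuous fun θ : ℝ => -(α ^ 2 * ζ ^ 2 * (1 - θ) ^ 2)).continuousAt
        · exact (by fun_prop : Continuous fun θ : ℝ => 4 * (ζ ^ 2 - α ^ 2 * θ ^ 2)).continuousAt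
        · exact hdne
      · exact continuousAt_const
    have hval : f 0 ζ = g ζ := by
      rw [hf, hg]
      simp only
      have e1 : Real.sqrt (ζ ^ 2 - α ^ 2 * (0:ℝ) ^ 2) = ζ := by
        norm_num; exact Real.sqrt_sq hζ0.le
      have e2 : -(α ^ 2 * ζ ^ 2 * (1 - (0:ℝ)) ^ 2) / (4 * (ζ ^ 2 - α ^ 2 * (0:ℝ) ^ 2))
          = -α ^ 2 / 4 := by
        have : ζ ≠ 0 := hζ0.ne'
        field_simp
        ring
      rw [e1, e2]
      have : ζ ≠ 0 := hζ0.ne'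
      field_simp
      try tauto
    have := (hcont.mono_left nhdsWithin_le_nhds).congr' (hev.mono fun θ h => h.symm)
    rwa [hval] at this
  have hDCT := MeasureTheory.tendsto_integral_filter_of_dominated_convergence
      (μ := μ) (bound := fun ζ => (4 / α) * (|Φ ζ| / ζ ^ 3)) (f := g)
      hmeas hbound hgint hlim
  have hfinal : Tendsto (fun θ => (α / Real.sqrt Real.pi) * ∫ ζ, F θ ζ ∂μ) l
      (𝓝 ((α / Real.sqrt Real.pi) * ∫ ζ, g ζ ∂μ)) := hDCT.const_mul _
  have hT : Tendsto (kernelG α Φ) l (𝓝 ((α / Real.sqrt Real.pi) * ∫ ζ, g ζ ∂μ)) := by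
    apply hfinal.congr'
    filter_upwards [hsmall] with θ hθ
    exact (heq θ hθ.1).symm
  have hI : (α / Real.sqrt Real.pi) * ∫ ζ, g ζ ∂μ =
      (α / Real.sqrt Real.pi) * Real.exp (-α ^ 2 / 4) * ∫ ζ in (0:ℝ)..α, Φ ζ / ζ ^ 3 := by
    rw [hg]
    rw [MeasureTheory.integral_const_mul]
    rw [intervalIntegral.integral_of_le hα.le]
    rw [hμ]
    ring
  rwa [hI] at hT
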